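/- Let X, Y be real Banach spaces, T ∈ B(X,Y) with a bounded homogeneous generalized inverse T^h : Y → X, and let δT ∈ B(X,Y) be such that T^h is quasi-additive on R(δT) and I_X + T^h∘δT is invertible in B(X,X). Put T̄ = T + δT. If R(T̄) ∩ N(T^h) = {0}, then R(T̄) = (I_Y + δT T^h)(R(T)), i.e. the range of T̄ is the image of R(T) under I_Y + δT∘T^h. -/

import Mathlib

open Metric Set

variable {X Y : Type*} [NormedAddCommGroup X] [NormedSpace ℝ X]
  [NormedAddCommGroup Y] [NormedSpace ℝ Y]

/-- `F` is a bounded homogeneous operator: `F (c • x) = c • F x` for all real `c`,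
and `F` maps bounded sets to bounded sets (equivalently, `‖F x‖ ≤ M * ‖x‖`). -/
def BddHomOp (F : X → Y) : Prop :=
  (∀ (c : ℝ) (x : X), F (c • x) = c • F x) ∧ ∃ M : ℝ, ∀ x, ‖F x‖ ≤ M * ‖x‖

/-- The norm of a (homogeneous) map: `sup {‖F x‖ : ‖x‖ = 1}`. -/
noncomputable def hnorm (F : X → Y) : ℝ :=
  sSup ((fun x => ‖F x‖) '' {x : X | ‖x‖ = 1})

/-- `F` is quasi-additive on the subset `M`. -/
def QuasiAdditiveOn (F : X → Y) (M : Set X) : Prop :=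
  ∀ x : X, ∀ z ∈ M, F (x + z) = F x + F z

/-- `S` is a bounded homogeneous generalized inverse of `T`: `T S T = T` and `S T S = S`. -/
def GenInv (T : X →L[ℝ] Y) (S : Y → X) : Prop :=
  BddHomOp S ∧ (∀ x, T (S (T x)) = T x) ∧ (∀ y, S (T (S y)) = S y)

/-- A subset `V` is Chebyshev: every point has a unique nearest point in `V`. -/
def IsChebyshev (V : Set X) : Prop :=
  ∀ x : X, ∃! v, v ∈ V ∧ ‖x - v‖ = Metric.infDist x V

/-- `p` is the metric projector onto `V`: `p x ∈ V` is a nearest point to `x` in `V`. -/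
def IsMetricProjOn (V : Set X) (p : X → X) : Prop :=
  ∀ x, p x ∈ V ∧ ‖x - p x‖ = Metric.infDist x V

/-- `TH` is a quasi-linear projector generalized inverse of `T`. -/
def QLPGenInv (T : X →L[ℝ] Y) (TH : Y → X) : Prop :=
  BddHomOp TH ∧ (∀ x, T (TH (T x)) = T x) ∧ (∀ y, TH (T (TH y)) = TH y) ∧
  (∃ P : X →L[ℝ] X, (∀ x, P (P x) = P x) ∧ Set.range ⇑P = {x : X | T x = 0} ∧
    ∀ x, TH (T x) = x - P x) ∧
  (∃ Q : Y → Y, BddHomOp Q ∧ (∀ y, Q (Q y) = Q y) ∧ QuasiAdditiveOn Q (Set.range Q) ∧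
    Set.range Q = Set.range ⇑T ∧ ∀ y, T (TH y) = Q y)

/-! Decompose `x = z + v` with `(I + Tʰ δT) z = Tʰ (T̄ x)`. Quasi-additivity gives
`z = Tʰ (T̄ x - δT z) ∈ R(Tʰ)`, so `Tʰ T z = z`, while `(I + Tʰ δT) v = x - Tʰ T x ∈ N(T)`;
the latter yields `Tʰ (T̄ v) = 0`, hence `T̄ v = 0` by `R(T̄) ∩ N(Tʰ) = {0}`.
Thus `T̄ x = T̄ z = (I + δT Tʰ)(T z)`. -/

theorem BddHomOp.map_neg {F : X → Y} (hF : BddHomOp F) (x : X) : F (-x) = -F x := by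
  simpa using hF.1 (-1) x

section GenInv

variable {T δT : X →L[ℝ] Y} {Th : Y → X}

theorem GenInv.apply_apply_eq_self_of_mem_range (hTh : GenInv T Th) {x : X}
    (hx : x ∈ Set.range Th) : Th (T x) = x := by
  obtain ⟨y, rfl⟩ := hx
  exact hTh.2.2 y

theorem GenInv.apply_sub_apply_apply_eq_zero (hTh : GenInv T Th) (x : X) :
    T (x - Th (T x)) = 0 := by
  rw [map_sub, hTh.2.1, sub_self]

theorem QuasiAdditiveOn.apply_add_apply (hq : QuasiAdditiveOn Th (Set.range δT)) (x : X) :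
    Th ((T + δT) x) = Th (T x) + Th (δT x) :=
  hq (T x) (δT x) ⟨x, rfl⟩

theorem mem_range_of_add_apply_mem_range (hTh : BddHomOp Th)
    (hq : QuasiAdditiveOn Th (Set.range δT)) {z : X} (hz : z + Th (δT z) ∈ Set.range Th) :
    z ∈ Set.range Th := by
  obtain ⟨y, hy⟩ := hz
  refine ⟨y + δT (-z), ?_⟩
  rw [hq y _ ⟨-z, rfl⟩, hy, map_neg, hTh.map_neg, add_neg_cancel_right]

theorem GenInv.add_apply_eq_zero_of_apply_add_eq_zero (hTh : GenInv T Th)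
    (hq : QuasiAdditiveOn Th (Set.range δT))
    (hstab : Set.range (T + δT) ∩ {y : Y | Th y = 0} = {0}) {v : X}
    (hv : T (v + Th (δT v)) = 0) : (T + δT) v = 0 := by
  have hTv : T v = -T (Th (δT v)) := by
    rw [map_add] at hv
    exact eq_neg_of_add_eq_zero_left hv
  have hThTv : Th (T v) = -Th (δT v) := by
    rw [hTv, hTh.1.map_neg, hTh.2.2]
  have hmem : (T + δT) v ∈ Set.range (T + δT) ∩ {y : Y | Th y = 0} := by
    refine ⟨⟨v, rfl⟩, ?_⟩
    rw [Set.mem_ofPred_eq, hq.apply_add_apply, hThTv, neg_add_cancel]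
  rw [hstab] at hmem
  exact hmem

theorem GenInv.exists_apply_apply_eq_self_and_add_apply_eq (hTh : GenInv T Th)
    (hq : QuasiAdditiveOn Th (Set.range δT))
    (hstab : Set.range (T + δT) ∩ {y : Y | Th y = 0} = {0}) (A : X →L[ℝ] X)
    (hA : ∀ x, A x = x + Th (δT x)) (hAsurj : Function.Surjective A) (x : X) :
    ∃ z, Th (T z) = z ∧ (T + δT) x = (T + δT) z := by
  obtain ⟨z, hz⟩ := hAsurj (Th ((T + δT) x))
  have hzT : Th (T z) = z := by
    refine hTh.apply_apply_eq_self_of_mem_range (mem_range_of_add_apply_mem_range hTh.1 hq ?_)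
    exact ⟨_, (hA z ▸ hz).symm⟩
  have hAv : (x - z) + Th (δT (x - z)) = x - Th (T x) := by
    rw [← hA, map_sub, hz, hA, hq.apply_add_apply]
    abel
  have hker := hTh.add_apply_eq_zero_of_apply_add_eq_zero hq hstab
    (hAv ▸ hTh.apply_sub_apply_apply_eq_zero x)
  exact ⟨z, hzT, by rwa [map_sub, sub_eq_zero] at hker⟩

end GenInv

theorem stmt_7_general (T δT : X →L[ℝ] Y)
    (Th : Y → X) (hTh : GenInv T Th)
    (hq : QuasiAdditiveOn Th (Set.range ⇑δT))
    (A : (X →L[ℝ] X)ˣ) (hA : ∀ x, (A : X →L[ℝ] X) x = x + Th (δT x))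
    (hstab : Set.range ⇑(T + δT) ∩ {y : Y | Th y = 0} = {0}) :
    Set.range ⇑(T + δT) = (fun y => y + δT (Th y)) '' Set.range ⇑T := by
  ext y
  constructor
  · rintro ⟨x, rfl⟩
    obtain ⟨z, hzT, hxz⟩ := hTh.exists_apply_apply_eq_self_and_add_apply_eq hq hstab A hA
      (ContinuousLinearEquiv.unitsEquiv ℝ X A).surjective x
    refine ⟨T z, ⟨z, rfl⟩, ?_⟩
    rw [hxz, add_apply]
    exact congrArg (T z + δT ·) hzT
  · rintro ⟨_, ⟨x, rfl⟩, rfl⟩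
    exact ⟨Th (T x), by rw [add_apply, hTh.2.1]⟩

theorem stmt_7 [CompleteSpace X] [CompleteSpace Y] (T δT : X →L[ℝ] Y)
    (Th : Y → X) (hTh : GenInv T Th)
    (hq : QuasiAdditiveOn Th (Set.range ⇑δT))
    (A : (X →L[ℝ] X)ˣ) (hA : ∀ x, (A : X →L[ℝ] X) x = x + Th (δT x))
    (hstab : Set.range ⇑(T + δT) ∩ {y : Y | Th y = 0} = {0}) :
    Set.range ⇑(T + δT) = (fun y => y + δT (Th y)) '' Set.range ⇑T :=
  stmt_7_general T δT Th hTh hq A hA hstab
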